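/- arXiv:1812.05145 — 2 statements merged into one kernel-verified Lean document; each statement's English description precedes it below -/
import Mathlib

section
/- Let k ≥ 2, n ≥ 2, λ ≥ 1 be integers and suppose A is an orthogonal array OA_λ(k,n) containing a row ρ repeated m times, where m = λn²/(k(n−1)+1). Then every row of A other than the m copies of ρ agrees with ρ in exactly k(λn − m)/(λn² − m) coordinates. -/
/-!
Let `a i` be the number of coordinates in which row `i` agrees with `ρ`. Counting incidences
column by column (each symbol occurs `λn` times in a column) and pairs of columns (each pair of
symbols occurs `λ` times) gives `∑ a = kλn` and `∑ a² = kλn + k(k-1)λ` over all rows. Removing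
the `m` copies of `ρ`, which have `a = k`, leaves `N = λn² - m` rows for which the choice of `m`
turns the Cauchy–Schwarz inequality `(∑ a)² ≤ N ∑ a²` into an equality, so `a` is constant on
them.
-/

open Finset

theorem Finset.eq_sum_div_card_of_sq_sum_eq_card_mul_sum_sq {ι R : Type*} [Field R]
    [LinearOrder R] [IsStrictOrderedRing R] {s : Finset ι} {x : ι → R}
    (h : (∑ i ∈ s, x i) ^ 2 = #s * ∑ i ∈ s, x i ^ 2) :
    ∀ i ∈ s, x i = (∑ i ∈ s, x i) / #s := by
  intro i hi
  have hs : (#s : R) ≠ 0 := Nat.cast_ne_zero.2 (card_ne_zero_of_mem hi)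
  set c := (∑ i ∈ s, x i) / #s
  have hsum : ∑ i ∈ s, x i = #s * c := by simp only [c]; field_simp
  have hsum_sq : ∑ i ∈ s, x i ^ 2 = #s * c ^ 2 :=
    mul_left_cancel₀ hs (by rw [← h, hsum]; ring)
  have hvar : ∑ i ∈ s, (x i - c) ^ 2 = 0 := calc
    ∑ i ∈ s, (x i - c) ^ 2 = ∑ i ∈ s, (x i ^ 2 - 2 * c * x i + c ^ 2) :=
      sum_congr rfl fun _ _ => by ring
    _ = ∑ i ∈ s, x i ^ 2 - 2 * c * ∑ i ∈ s, x i + #s * c ^ 2 := by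
      rw [sum_add_distrib, sum_sub_distrib, mul_sum, sum_const, nsmul_eq_mul]
    _ = 0 := by rw [hsum, hsum_sq]; ring
  have := (sum_eq_zero_iff_of_nonneg fun j _ => sq_nonneg (x j - c)).1 hvar i hi
  exact sub_eq_zero.1 (pow_eq_zero_iff two_ne_zero |>.1 this)

variable {ι κ α : Type*} [DecidableEq α]

def IsOrthogonalArray [Fintype ι] (lam : ℕ) (A : ι → κ → α) : Prop :=
  ∀ j j' : κ, j ≠ j' → ∀ x y : α, #{r | A r j = x ∧ A r j' = y} = lam

theorem IsOrthogonalArray.card_filter_eq [Fintype ι] [Fintype α] {lam : ℕ} {A : ι → κ → α}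
    (hA : IsOrthogonalArray lam A) {j j' : κ} (hj : j' ≠ j) (x : α) :
    #{r | A r j = x} = lam * Fintype.card α := by
  rw [card_eq_sum_card_fiberwise (f := fun r => A r j') (t := univ) fun _ _ => mem_univ _]
  simp [filter_filter, hA j j' hj.symm, mul_comm]

variable [Fintype κ]

def agreement (f g : κ → α) : ℕ := #{j | f j = g j}

theorem agreement_self (f : κ → α) : agreement f f = Fintype.card κ := by
  simp [agreement]

theorem sum_agreement (s : Finset ι) (A : ι → κ → α) (ρ : κ → α) :
    ∑ i ∈ s, agreement (A i) ρ = ∑ j, #{i ∈ s | A i j = ρ j} := by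
  simp only [agreement, card_filter]
  exact sum_comm

theorem sum_agreement_sq (s : Finset ι) (A : ι → κ → α) (ρ : κ → α) :
    ∑ i ∈ s, agreement (A i) ρ ^ 2 = ∑ j, ∑ j', #{i ∈ s | A i j = ρ j ∧ A i j' = ρ j'} := by
  simp only [agreement, card_filter, sq, sum_mul_sum, ite_zero_mul_ite_zero, mul_one]
  rw [sum_comm]
  exact sum_congr rfl fun _ _ => sum_comm

namespace IsOrthogonalArray

variable [Fintype ι] [Fintype α] [Nontrivial κ] {lam : ℕ} {A : ι → κ → α}

theorem sum_agreement (hA : IsOrthogonalArray lam A) (ρ : κ → α) :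
    ∑ i, agreement (A i) ρ = Fintype.card κ * (lam * Fintype.card α) := by
  rw [_root_.sum_agreement]
  simp [fun j => hA.card_filter_eq (exists_ne j).choose_spec]

theorem sum_agreement_sq [DecidableEq κ] (hA : IsOrthogonalArray lam A) (ρ : κ → α) :
    ∑ i, agreement (A i) ρ ^ 2 =
      Fintype.card κ * (lam * Fintype.card α + (Fintype.card κ - 1) * lam) := by
  rw [_root_.sum_agreement_sq, ← smul_eq_mul, ← card_univ, ← sum_const]
  refine sum_congr rfl fun j _ => ?_
  rw [← add_sum_erase _ _ (mem_univ j),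
    sum_congr rfl fun j' hj' => hA j j' (ne_of_mem_erase hj').symm _ _]
  simp [hA.card_filter_eq (exists_ne j).choose_spec, card_erase_of_mem]

theorem sum_compl_agreement [DecidableEq ι] (hA : IsOrthogonalArray lam A) {ρ : κ → α}
    {S : Finset ι} (hS : ∀ r ∈ S, A r = ρ) :
    ∑ r ∈ Sᶜ, agreement (A r) ρ + #S * Fintype.card κ =
      Fintype.card κ * (lam * Fintype.card α) := by
  rw [← hA.sum_agreement ρ, ← sum_compl_add_sum S,
    sum_const_nat (s := S) fun r hr => by rw [hS r hr, agreement_self]]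

theorem sum_compl_agreement_sq [DecidableEq ι] [DecidableEq κ] (hA : IsOrthogonalArray lam A)
    {ρ : κ → α} {S : Finset ι} (hS : ∀ r ∈ S, A r = ρ) :
    ∑ r ∈ Sᶜ, agreement (A r) ρ ^ 2 + #S * Fintype.card κ ^ 2 =
      Fintype.card κ * (lam * Fintype.card α + (Fintype.card κ - 1) * lam) := by
  rw [← hA.sum_agreement_sq ρ, ← sum_compl_add_sum S,
    sum_const_nat (s := S) fun r hr => by rw [hS r hr, agreement_self]]

end IsOrthogonalArray

theorem repeated_row_equality_case_general (k n lam m : ℕ) (hk : 2 ≤ k) (hn : 2 ≤ n)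
    (A : Fin (lam * n ^ 2) → Fin k → Fin n)
    (hOA : ∀ j j' : Fin k, j ≠ j' → ∀ x y : Fin n,
      (Finset.univ.filter (fun r => A r j = x ∧ A r j' = y)).card = lam)
    (ρ : Fin k → Fin n)
    (S : Finset (Fin (lam * n ^ 2))) (hScard : S.card = m)
    (hSrep : ∀ r ∈ S, A r = ρ)
    (hm : (m : ℚ) = ((lam : ℚ) * n ^ 2) / ((k : ℚ) * ((n : ℚ) - 1) + 1)) :
    ∀ i : Fin (lam * n ^ 2), i ∉ S →
      ((Finset.univ.filter (fun j => A i j = ρ j)).card : ℚ) =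
        (k : ℚ) * ((lam : ℚ) * n - m) / ((lam : ℚ) * n ^ 2 - m) := by
  intro i hi
  have : Nontrivial (Fin k) := Fin.nontrivial_iff_two_le.mpr hk
  have hmD : (m : ℚ) * (k * (n - 1) + 1) = lam * n ^ 2 := by
    have : (1 : ℚ) ≤ n - 1 := by
      have : (2 : ℚ) ≤ n := by exact_mod_cast hn
      linarith
    rw [hm, div_mul_cancel₀]
    positivity
  have h1 := IsOrthogonalArray.sum_compl_agreement hOA hSrep
  have h2 := IsOrthogonalArray.sum_compl_agreement_sq hOA hSrep
  simp only [Fintype.card_fin, hScard] at h1 h2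
  qify [Nat.one_le_of_lt hk] at h1 h2
  have hT : (#Sᶜ : ℚ) = lam * n ^ 2 - m := by
    have hmN : m ≤ lam * n ^ 2 := hScard ▸ (card_le_univ S).trans_eq (Fintype.card_fin _)
    rw [card_compl, Fintype.card_fin, hScard, Nat.cast_sub hmN]
    push_cast; ring
  have hCS : (∑ r ∈ Sᶜ, (agreement (A r) ρ : ℚ)) ^ 2 =
      #Sᶜ * ∑ r ∈ Sᶜ, (agreement (A r) ρ : ℚ) ^ 2 := by
    rw [eq_sub_of_add_eq h1, eq_sub_of_add_eq h2, hT]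
    linear_combination (k * (lam * n - lam)) * hmD
  refine (eq_sum_div_card_of_sq_sum_eq_card_mul_sum_sq hCS i (mem_compl.2 hi)).trans ?_
  rw [eq_sub_of_add_eq h1, hT]
  ring

/-- Equality case: if an OA_λ(k,n) contains a row ρ repeated m times with
m = λn²/(k(n−1)+1), then every row other than the m copies of ρ agrees with ρ
in exactly k(λn − m)/(λn² − m) coordinates. -/
theorem repeated_row_equality_case (k n lam m : ℕ) (hk : 2 ≤ k) (hn : 2 ≤ n) (hlam : 1 ≤ lam)
    (A : Fin (lam * n ^ 2) → Fin k → Fin n)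
    (hOA : ∀ j j' : Fin k, j ≠ j' → ∀ x y : Fin n,
      (Finset.univ.filter (fun r => A r j = x ∧ A r j' = y)).card = lam)
    (ρ : Fin k → Fin n)
    (S : Finset (Fin (lam * n ^ 2))) (hScard : S.card = m)
    (hSrep : ∀ r ∈ S, A r = ρ)
    (hm : (m : ℚ) = ((lam : ℚ) * n ^ 2) / ((k : ℚ) * ((n : ℚ) - 1) + 1)) :
    ∀ i : Fin (lam * n ^ 2), i ∉ S →
      ((Finset.univ.filter (fun j => A i j = ρ j)).card : ℚ) =
        (k : ℚ) * ((lam : ℚ) * n - m) / ((lam : ℚ) * n ^ 2 - m) :=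
  repeated_row_equality_case_general k n lam m hk hn A hOA ρ S hScard hSrep hm
end

section
/- Let A be an orthogonal array OA_λ(k,n) (k ≥ 2, n ≥ 2, λ ≥ 1) with N = λn² rows containing a row ρ repeated exactly m times, and for each row index i not carrying a copy of ρ let a_i be the number of coordinates in which row i agrees with ρ. Then the sum of the a_i over these N − m rows equals k(λn − m), the sum of a_i(a_i − 1) equals k(k−1)(λ − m), and the sum of a_i² equals k(k(λ−m) + λ(n−1)). -/
/-!
Double counting. Counting incidences between rows and columns (resp. ordered pairs of distinct
columns) on which a row agrees with ρ gives `∑ a_i = k λ n` and `∑ a_i (a_i - 1) = k (k - 1) λ`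
over all rows, since each column meets ρ in `λ n` rows and each pair of columns in `λ` rows.
The `m` copies of ρ each contribute `a_i = k`; removing them and using `a² = a (a - 1) + a`
gives the three identities.
-/

open Finset

namespace OrthogonalArray

variable {R ι α : Type*} [Fintype R] [DecidableEq α]

def IsOrthogonalArray (lam : ℕ) (A : R → ι → α) : Prop :=
  ∀ j j' : ι, j ≠ j' → ∀ x y : α, #{r | A r j = x ∧ A r j' = y} = lam

def agreements [Fintype ι] (σ ρ : ι → α) : ℕ := #{j | σ j = ρ j}

theorem card_filter_apply_eq [Fintype α] [Nontrivial ι] {lam : ℕ} {A : R → ι → α}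
    (hA : IsOrthogonalArray lam A) (j : ι) (x : α) :
    #{r | A r j = x} = lam * Fintype.card α := by
  obtain ⟨j', hj'⟩ := exists_ne j
  rw [card_eq_sum_card_fiberwise (f := fun r => A r j') (t := univ) fun _ _ => mem_univ _]
  simp only [filter_filter, hA j j' hj'.symm, sum_const, card_univ, smul_eq_mul, mul_comm]

theorem sum_agreements [Fintype ι] [Fintype α] [Nontrivial ι] {lam : ℕ} {A : R → ι → α}
    (hA : IsOrthogonalArray lam A) (ρ : ι → α) :
    ∑ r, agreements (A r) ρ = Fintype.card ι * (lam * Fintype.card α) := by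
  have h := sum_card_bipartiteAbove_eq_sum_card_bipartiteBelow
    (s := (univ : Finset R)) (t := (univ : Finset ι)) (r := fun r j => A r j = ρ j)
  simp only [bipartiteAbove, bipartiteBelow, card_filter_apply_eq hA] at h
  simpa [agreements] using h

theorem natCast_card_offDiag {β : Type*} [DecidableEq β] (s : Finset β) :
    (#s.offDiag : ℤ) = #s * (#s - 1) := by
  rw [offDiag_card, Nat.cast_sub (Nat.le_mul_self _)]
  push_cast
  ring

theorem sum_agreements_mul_pred [Fintype ι] [DecidableEq ι] {lam : ℕ} {A : R → ι → α}
    (hA : IsOrthogonalArray lam A) (ρ : ι → α) :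
    ∑ r, (agreements (A r) ρ : ℤ) * (agreements (A r) ρ - 1) =
      Fintype.card ι * (Fintype.card ι - 1) * lam := by
  have hpairs : ∀ r, ({j | A r j = ρ j} : Finset ι).offDiag =
      {p ∈ (univ : Finset ι).offDiag | A r p.1 = ρ p.1 ∧ A r p.2 = ρ p.2} := fun r => by
    ext p
    simp only [mem_offDiag, mem_filter, mem_univ, true_and]
    tauto
  have h := sum_card_bipartiteAbove_eq_sum_card_bipartiteBelow
    (s := (univ : Finset R)) (t := (univ : Finset ι).offDiag)
    (r := fun r p => A r p.1 = ρ p.1 ∧ A r p.2 = ρ p.2)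
  simp only [bipartiteAbove, bipartiteBelow] at h
  rw [sum_congr rfl fun p hp => hA p.1 p.2 (mem_offDiag.mp hp).2.2 (ρ p.1) (ρ p.2),
    sum_const, smul_eq_mul] at h
  simp only [agreements, ← natCast_card_offDiag, hpairs]
  rw [← card_univ, ← natCast_card_offDiag]
  exact_mod_cast h

theorem sum_filter_ne_eq_sub [Fintype ι] (A : R → ι → α) (ρ : ι → α) (f : ℕ → ℤ) :
    ∑ r ∈ {r | A r ≠ ρ}, f (agreements (A r) ρ) =
      ∑ r, f (agreements (A r) ρ) - #{r | A r = ρ} * f (Fintype.card ι) := by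
  have hρ : ∀ r ∈ ({r | A r = ρ} : Finset R), f (agreements (A r) ρ) = f (Fintype.card ι) :=
    fun r hr => by simp [agreements, (mem_filter.mp hr).2]
  rw [← sum_filter_add_sum_filter_not univ (fun r => A r = ρ), sum_congr rfl hρ, sum_const,
    nsmul_eq_mul]
  ring

end OrthogonalArray

open OrthogonalArray in
theorem oa_moment_identities_repeated_general (k n lam m : ℕ) (hk : 2 ≤ k)
    (A : Fin (lam * n ^ 2) → Fin k → Fin n)
    (hOA : ∀ j j' : Fin k, j ≠ j' → ∀ x y : Fin n,
      (Finset.univ.filter (fun r => A r j = x ∧ A r j' = y)).card = lam)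
    (ρ : Fin k → Fin n)
    (hm : (Finset.univ.filter (fun r => A r = ρ)).card = m)
    (a : Fin (lam * n ^ 2) → ℕ)
    (ha : ∀ i, a i = (Finset.univ.filter (fun j => A i j = ρ j)).card) :
    (∑ i ∈ Finset.univ.filter (fun r => A r ≠ ρ), (a i : ℤ)) =
      (k : ℤ) * ((lam : ℤ) * n - m) ∧
    (∑ i ∈ Finset.univ.filter (fun r => A r ≠ ρ), (a i : ℤ) * ((a i : ℤ) - 1)) =
      (k : ℤ) * ((k : ℤ) - 1) * ((lam : ℤ) - m) ∧
    (∑ i ∈ Finset.univ.filter (fun r => A r ≠ ρ), (a i : ℤ) ^ 2) =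
      (k : ℤ) * ((k : ℤ) * ((lam : ℤ) - m) + (lam : ℤ) * ((n : ℤ) - 1)) := by
  have : Nontrivial (Fin k) := Fin.nontrivial_iff_two_le.mpr hk
  obtain rfl : a = fun i => agreements (A i) ρ := funext ha
  have h1 : ∑ i, (agreements (A i) ρ : ℤ) = k * (lam * n) := by
    exact_mod_cast (Fintype.card_fin k ▸ Fintype.card_fin n ▸ sum_agreements hOA ρ)
  have h2 := Fintype.card_fin k ▸ sum_agreements_mul_pred hOA ρ
  have e1 := sum_filter_ne_eq_sub A ρ (fun t => (t : ℤ))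
  have e2 := sum_filter_ne_eq_sub A ρ (fun t => (t : ℤ) * (t - 1))
  simp only [Fintype.card_fin, hm] at e1 e2
  refine ⟨by rw [e1, h1]; ring, by rw [e2, h2]; ring, ?_⟩
  calc _ = ∑ i ∈ Finset.univ.filter (fun r => A r ≠ ρ),
        ((agreements (A i) ρ : ℤ) * (agreements (A i) ρ - 1) + agreements (A i) ρ) :=
        Finset.sum_congr rfl fun _ _ => by ring
    _ = _ := by rw [Finset.sum_add_distrib, e1, e2, h1, h2]; ring

/-- Moment identities for an OA_λ(k,n) with a row ρ repeated exactly m times: letting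
a_i be the number of agreements of row i with ρ, the sums over the rows i with
row ≠ ρ of a_i, a_i(a_i−1) and a_i² are k(λn−m), k(k−1)(λ−m) and
k(k(λ−m)+λ(n−1)) respectively. -/
theorem oa_moment_identities_repeated (k n lam m : ℕ) (hk : 2 ≤ k) (hn : 2 ≤ n)
    (hlam : 1 ≤ lam)
    (A : Fin (lam * n ^ 2) → Fin k → Fin n)
    (hOA : ∀ j j' : Fin k, j ≠ j' → ∀ x y : Fin n,
      (Finset.univ.filter (fun r => A r j = x ∧ A r j' = y)).card = lam)
    (ρ : Fin k → Fin n)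
    (hm : (Finset.univ.filter (fun r => A r = ρ)).card = m)
    (a : Fin (lam * n ^ 2) → ℕ)
    (ha : ∀ i, a i = (Finset.univ.filter (fun j => A i j = ρ j)).card) :
    (∑ i ∈ Finset.univ.filter (fun r => A r ≠ ρ), (a i : ℤ)) =
      (k : ℤ) * ((lam : ℤ) * n - m) ∧
    (∑ i ∈ Finset.univ.filter (fun r => A r ≠ ρ), (a i : ℤ) * ((a i : ℤ) - 1)) =
      (k : ℤ) * ((k : ℤ) - 1) * ((lam : ℤ) - m) ∧
    (∑ i ∈ Finset.univ.filter (fun r => A r ≠ ρ), (a i : ℤ) ^ 2) =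
      (k : ℤ) * ((k : ℤ) * ((lam : ℤ) - m) + (lam : ℤ) * ((n : ℤ) - 1)) :=
  oa_moment_identities_repeated_general k n lam m hk A hOA ρ hm a ha
end
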